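/- arXiv:1712.00527 — 3 statements merged into one kernel-verified Lean document; each statement's English description precedes it below -/
import Mathlib

section
/- The expected sampled-softmax probability of the positive class is at least its full softmax probability: E[exp(o_1)/(exp(o_1) + ∑_{k=2}^{m+1} exp(o'_{k}))] ≥ exp(o_1)/(exp(o_1) + ∑_{j=2}^n exp(o_j)), where o'_k = o_{s_k} − ln(m·q_{s_k}). -/
open Finset Real

lemma convexOn_const_div (a : ℝ) (ha : 0 < a) :
    ConvexOn ℝ (Set.Ici 0) (fun x : ℝ => a / (a + x)) := by
  have h1 : ConvexOn ℝ (Set.Ioi (0:ℝ)) (fun x : ℝ => x⁻¹) := by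
    simpa using (strictConvexOn_zpow (m := -1) (by norm_num) (by norm_num)).convexOn
  have h2 := (h1.translate_right a).smul (le_of_lt ha)
  have h3 : ConvexOn ℝ (Set.Ici (0:ℝ))
      (fun x : ℝ => a • ((fun x : ℝ => x⁻¹) ∘ fun z => a + z) x) :=
    h2.subset (fun x hx => by
      simp only [Set.mem_preimage, Set.mem_Ioi]
      exact add_pos_of_pos_of_nonneg ha hx) (convex_Ici 0)
  have heq : (fun x : ℝ => a • ((fun x : ℝ => x⁻¹) ∘ fun z => a + z) x)
      = fun x : ℝ => a / (a + x) := by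
    funext x; simp [div_eq_mul_inv, Function.comp]
  rwa [heq] at h3

/-- The expected sampled-softmax probability of the positive class is at
least its full softmax probability. -/
theorem expected_sampled_softmax_ge {ι : Type*} [Fintype ι] [Nonempty ι]
    (m : ℕ) (hm : 1 ≤ m) (o1 : ℝ) (o : ι → ℝ) (q : ι → ℝ)
    (hq : ∀ j, 0 < q j) (hq1 : ∑ j, q j = 1) :
    Real.exp o1 / (Real.exp o1 + ∑ j, Real.exp (o j)) ≤
      ∑ s : Fin m → ι, (∏ k, q (s k)) *
        (Real.exp o1 /
          (Real.exp o1 + ∑ k, Real.exp (o (s k) - Real.log (m * q (s k))))) := by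
  classical
  set a := Real.exp o1 with ha_def
  have ha : 0 < a := Real.exp_pos _
  set f : ℝ → ℝ := fun x => a / (a + x) with hf_def
  set G : ι → ℝ := fun j => Real.exp (o j - Real.log (m * q j)) with hG_def
  set w : (Fin m → ι) → ℝ := fun s => ∏ k, q (s k) with hw_def
  have hmq : ∀ j, (0:ℝ) < m * q j := fun j =>
    mul_pos (by exact_mod_cast Nat.lt_of_lt_of_le Nat.zero_lt_one hm) (hq j)
  have hG : ∀ j, G j = Real.exp (o j) / (m * q j) := by
    intro j
    show Real.exp (o j - Real.log (m * q j)) = _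
    rw [Real.exp_sub, Real.exp_log (hmq j)]
  -- weights sum to 1
  have hwsum : ∑ s : Fin m → ι, w s = 1 := by
    rw [hw_def, ← Fintype.prod_sum fun _ j => q j]
    simp [hq1]
  -- expected point
  have hexp : ∑ s : Fin m → ι, w s • (∑ k, G (s k)) = ∑ j, Real.exp (o j) := by
    have key : ∀ k₀ : Fin m,
        ∑ s : Fin m → ι, (∏ k, q (s k)) * G (s k₀)
          = (∑ j, Real.exp (o j)) / m := by
      intro k₀
      have step : ∀ s : Fin m → ι, (∏ k, q (s k)) * G (s k₀)
          = ∏ k, (q (s k) * if k = k₀ then G (s k) else 1) := by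
        intro s
        rw [Finset.prod_mul_distrib]
        simp [Finset.prod_ite_eq' Finset.univ k₀ (fun k => G (s k))]
      calc ∑ s : Fin m → ι, (∏ k, q (s k)) * G (s k₀)
          = ∑ s : Fin m → ι, ∏ k, (q (s k) * if k = k₀ then G (s k) else 1) := by
            simp only [step]
        _ = ∏ k, ∑ j, (q j * if k = k₀ then G j else 1) :=
            (Fintype.prod_sum fun k j => q j * if k = k₀ then G j else 1).symm
        _ = ∑ j, q j * G j := by
            rw [Finset.prod_eq_single k₀ (fun k _ hk => by simp [hk, hq1])
              (fun h => absurd (Finset.mem_univ k₀) h)]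
            simp
        _ = (∑ j, Real.exp (o j)) / m := by
            rw [Finset.sum_div]
            refine Finset.sum_congr rfl fun j _ => ?_
            rw [hG j, mul_div_assoc', mul_comm ((m:ℝ)) (q j),
              mul_div_mul_left _ _ (hq j).ne']
    calc ∑ s : Fin m → ι, w s • (∑ k, G (s k))
        = ∑ s : Fin m → ι, ∑ k, (∏ k', q (s k')) * G (s k) := by
          simp [hw_def, smul_eq_mul, Finset.mul_sum]
      _ = ∑ k, ∑ s : Fin m → ι, (∏ k', q (s k')) * G (s k) := Finset.sum_comm
      _ = ∑ _k : Fin m, (∑ j, Real.exp (o j)) / m := by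
          exact Finset.sum_congr rfl fun k _ => key k
      _ = ∑ j, Real.exp (o j) := by
          rw [Finset.sum_const, Finset.card_univ, Fintype.card_fin, nsmul_eq_mul]
          field_simp
  have hcvx := convexOn_const_div a ha
  have h₀ : ∀ s ∈ (Finset.univ : Finset (Fin m → ι)), 0 ≤ w s := fun s _ =>
    Finset.prod_nonneg fun k _ => (hq _).le
  have hmem : ∀ s ∈ (Finset.univ : Finset (Fin m → ι)),
      (∑ k, G (s k)) ∈ Set.Ici (0:ℝ) := fun s _ =>
    Finset.sum_nonneg fun k _ => (Real.exp_pos _).le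
  have hj := hcvx.map_sum_le h₀ hwsum hmem
  rw [hexp] at hj
  simpa [hf_def, smul_eq_mul] using hj
end

section
/- Equality holds in the Jensen bound for the positive class (i.e., the sampled softmax estimator of the positive-class probability is unbiased) if and only if the sampling distribution is proportional to the exponentiated logits: q_j ∝ exp(o_j) for j ∈ {2,...,n}. -/
open Finset Real

lemma aux_strictConvexOn {c : ℝ} (hc : 0 < c) :
    StrictConvexOn ℝ (Set.Ioi (0:ℝ)) (fun y => c / (c + y)) := by
  have h1 : StrictConvexOn ℝ (Set.Ioi (0:ℝ)) (fun y : ℝ => y ^ (-1 : ℤ)) :=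
    strictConvexOn_zpow (by decide) (by decide)
  have h2 := h1.translate_right c
  have hsub : Set.Ioi (0:ℝ) ⊆ (fun z : ℝ => c + z) ⁻¹' Set.Ioi 0 := by
    intro x hx
    simp only [Set.mem_preimage, Set.mem_Ioi] at *
    linarith
  have h3 := h2.subset hsub (convex_Ioi 0)
  have h4 : StrictConvexOn ℝ (Set.Ioi (0:ℝ)) (fun y => c * ((c + y) ^ (-1:ℤ))) := by
    refine ⟨convex_Ioi 0, fun x hx y hy hxy a b ha hb hab => ?_⟩
    have h5 := h3.2 hx hy hxy ha hb hab
    simp only [Function.comp, smul_eq_mul] at h5 ⊢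
    have h6 := mul_lt_mul_of_pos_left h5 hc
    calc c * (c + (a * x + b * y)) ^ (-1:ℤ)
        = c * ((c + (a * x + b * y)) ^ (-1:ℤ)) := by ring
      _ < c * (a * (c + x) ^ (-1:ℤ) + b * (c + y) ^ (-1:ℤ)) := h6
      _ = a * (c * (c + x) ^ (-1:ℤ)) + b * (c * (c + y) ^ (-1:ℤ)) := by ring
  have : (fun y : ℝ => c / (c + y)) = fun y => c * ((c + y) ^ (-1:ℤ)) := by
    funext y; rw [zpow_neg_one, div_eq_mul_inv]
  rw [this]
  exact h4

/-- Unbiasedness of the sampled softmax estimator for the positive class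
holds iff the sampling distribution is the softmax distribution. -/
theorem sampled_softmax_unbiased_iff_softmax {ι : Type*} [Fintype ι] [Nonempty ι]
    (m : ℕ) (hm : 1 ≤ m) (o1 : ℝ) (o : ι → ℝ) (q : ι → ℝ)
    (hq : ∀ j, 0 < q j) (hq1 : ∑ j, q j = 1) :
    (∑ s : Fin m → ι, (∏ k, q (s k)) *
        (Real.exp o1 /
          (Real.exp o1 + ∑ k, Real.exp (o (s k) - Real.log (m * q (s k))))) =
      Real.exp o1 / (Real.exp o1 + ∑ j, Real.exp (o j)))
    ↔ ∀ j, q j = Real.exp (o j) / ∑ l, Real.exp (o l) := by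
  classical
  have hm0 : (m:ℝ) ≠ 0 := Nat.cast_ne_zero.2 (by omega)
  have hmpos : (0:ℝ) < m := Nat.cast_pos.2 (by omega)
  set S := ∑ l, Real.exp (o l) with hS
  have hSpos : 0 < S := Finset.sum_pos (fun l _ => Real.exp_pos _) univ_nonempty
  set c := Real.exp o1 with hc
  have hcpos : 0 < c := Real.exp_pos _
  set w : ι → ℝ := fun j => Real.exp (o j) / q j with hw
  have hwpos : ∀ j, 0 < w j := fun j => div_pos (Real.exp_pos _) (hq j)
  have hqw : ∀ j, q j * w j = Real.exp (o j) := fun j => by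
    rw [hw, mul_comm, div_mul_cancel₀ _ (hq j).ne']
  set P : (Fin m → ι) → ℝ := fun s => ∏ k, q (s k) with hP
  set X : (Fin m → ι) → ℝ := fun s => ∑ k, w (s k) / m with hX
  have hPpos : ∀ s, 0 < P s := fun s => Finset.prod_pos fun k _ => hq _
  have hkey : ∀ (s : Fin m → ι) (k : Fin m),
      Real.exp (o (s k) - Real.log (↑m * q (s k))) = w (s k) / m := by
    intro s k
    rw [Real.exp_sub, Real.exp_log (mul_pos hmpos (hq _))]
    rw [hw, div_div, mul_comm]
  have hsum : ∀ s : Fin m → ι,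
      ∑ k, Real.exp (o (s k) - Real.log (↑m * q (s k))) = X s := by
    intro s
    rw [hX]
    exact Finset.sum_congr rfl fun k _ => hkey s k
  have hP1 : ∑ s : Fin m → ι, P s = 1 := by
    simp only [hP]
    rw [← Fintype.piFinset_univ, ← Finset.prod_univ_sum]
    simp [hq1]
  have hL2 : ∀ (g : ι → ℝ) (k₀ : Fin m),
      ∑ s : Fin m → ι, P s * g (s k₀) = ∑ j, q j * g j := by
    intro g k₀
    have h1 : ∀ s : Fin m → ι,
        P s * g (s k₀) = ∏ k, (q (s k) * if k = k₀ then g (s k) else 1) := by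
      intro s
      rw [Finset.prod_mul_distrib, Finset.prod_ite_eq' univ k₀ (fun k => g (s k))]
      simp [hP]
    simp only [h1]
    rw [← Fintype.piFinset_univ,
      ← Finset.prod_univ_sum (fun _ => (univ : Finset ι))
        (fun k j => q j * if k = k₀ then g j else 1)]
    rw [Finset.prod_eq_single k₀]
    · simp
    · intro k _ hk
      simp [hk, hq1]
    · simp
  have hcm : ∑ s : Fin m → ι, P s * X s = S := by
    simp only [hX, Finset.mul_sum]
    rw [Finset.sum_comm]
    have h2 : ∀ k₀ : Fin m, ∑ s : Fin m → ι, P s * (w (s k₀) / ↑m) = S / m := by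
      intro k₀
      rw [hL2 (fun j => w j / m) k₀]
      have : ∀ j ∈ (univ : Finset ι), q j * (w j / ↑m) = Real.exp (o j) / m := by
        intro j _
        rw [← mul_div_assoc, hqw]
      rw [Finset.sum_congr rfl this, ← Finset.sum_div]
    calc ∑ k : Fin m, ∑ s : Fin m → ι, P s * (w (s k) / ↑m)
        = ∑ _k : Fin m, S / m := Finset.sum_congr rfl fun k _ => h2 k
      _ = S := by
          rw [Finset.sum_const, card_univ, Fintype.card_fin, nsmul_eq_mul]
          field_simp
  have hgoalL : (∑ s : Fin m → ι, (∏ k, q (s k)) *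
      (c / (c + ∑ k, Real.exp (o (s k) - Real.log (↑m * q (s k)))))) =
      ∑ s : Fin m → ι, P s * (c / (c + X s)) := by
    refine Finset.sum_congr rfl fun s _ => ?_
    rw [hsum s, hP]
  haveI : Nonempty (Fin m) := ⟨⟨0, by omega⟩⟩
  rw [hgoalL]
  constructor
  · -- forward: equality implies q is softmax
    intro heq
    by_contra hcon
    push_neg at hcon
    obtain ⟨j₀, hj₀⟩ := hcon
    -- w is not constant
    have hne : ∃ a b : ι, w a ≠ w b := by
      by_contra hall
      push_neg at hall
      have hwS : ∀ j, w j = S := by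
        intro j
        have : S = ∑ l, q l * w l := by
          rw [hS]; exact Finset.sum_congr rfl fun l _ => (hqw l).symm
        have h3 : S = ∑ l, q l * w j :=
          this.trans (Finset.sum_congr rfl fun l _ => by rw [hall l j])
        rw [← Finset.sum_mul, hq1, one_mul] at h3
        exact h3.symm
      apply hj₀
      have h4 := hwS j₀
      simp only [hw] at h4
      rw [div_eq_iff (hq j₀).ne'] at h4
      rw [eq_div_iff hSpos.ne']
      linarith [h4]
    obtain ⟨a, b, hab⟩ := hne
    have hXconst : ∀ t : ι, X (fun _ => t) = w t := by
      intro t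
      rw [hX]
      simp only
      rw [Finset.sum_const, card_univ, Fintype.card_fin, nsmul_eq_mul]
      field_simp
    have hjen := (aux_strictConvexOn hcpos).map_sum_lt (t := univ) (w := P) (p := X)
      (fun s _ => hPpos s) hP1
      (fun s _ => Finset.sum_pos (fun k _ => div_pos (hwpos _) hmpos) univ_nonempty)
      ⟨fun _ => a, mem_univ _, fun _ => b, mem_univ _, by
        rw [hXconst a, hXconst b]; exact hab⟩
    simp only [smul_eq_mul] at hjen
    rw [hcm, heq] at hjen
    exact lt_irrefl _ hjen
  · -- backward: softmax implies equality
    intro h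
    have hwS : ∀ j, w j = S := by
      intro j
      simp only [hw, h j]
      rw [div_div_eq_mul_div]
      exact mul_div_cancel_left₀ S (Real.exp_ne_zero _)
    have hXS : ∀ s : Fin m → ι, X s = S := by
      intro s
      rw [hX]
      simp only [hwS]
      rw [Finset.sum_const, card_univ, Fintype.card_fin, nsmul_eq_mul]
      field_simp
    calc ∑ s : Fin m → ι, P s * (c / (c + X s))
        = ∑ s : Fin m → ι, P s * (c / (c + S)) :=
          Finset.sum_congr rfl fun s _ => by rw [hXS s]
      _ = (∑ s : Fin m → ι, P s) * (c / (c + S)) := by rw [Finset.sum_mul]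
      _ = c / (c + S) := by rw [hP1, one_mul]
end

section
/- When sampling from the softmax distribution, the gradient of the sampled softmax loss is an unbiased estimator of the full softmax gradient for every negative class i: E[∑_{j=1}^{m+1} 1(s_j = i)·p'_j] = p_i, where p'_j is the sampled softmax probability with corrected logits and p_i the full softmax probability. -/
open Finset Real

/-!
With the logQ correction every sampled logit `o (s k) - log (m * q (s k))` equals
`log (Z / m)`, where `Z = ∑ l, exp (o l)`. Hence the sampled partition function is
deterministic and equal to the full one, `exp o1 + Z`, and the sampled gradient for class `i`
is `(Z / m) / (exp o1 + Z)` times the number of draws equal to `i`, whose expectation under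
i.i.d. sampling from `q` is `m * q i`.
-/

theorem exp_sub_log_mul_exp_div {x c Z : ℝ} (hc : 0 < c) (hZ : 0 < Z) :
    exp (x - log (c * (exp x / Z))) = Z / c := by
  rw [exp_sub, exp_log (by positivity)]
  field_simp

section IIDSampling

variable {R ι κ : Type*} [CommSemiring R] [Fintype ι] [Fintype κ] [DecidableEq κ]

theorem sum_pi_prod_mul_apply {q : ι → R} (hq : ∑ j, q j = 1) (f : ι → R) (k₀ : κ) :
    ∑ s : κ → ι, (∏ k, q (s k)) * f (s k₀) = ∑ j, q j * f j := by
  let g : κ → ι → R := fun k j => if k = k₀ then q j * f j else q j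
  have hg : ∀ s : κ → ι, (∏ k, q (s k)) * f (s k₀) = ∏ k, g k (s k) := by
    intro s
    rw [← mul_prod_erase univ _ (mem_univ k₀), ← mul_prod_erase univ _ (mem_univ k₀)]
    rw [prod_congr rfl fun k hk => if_neg (ne_of_mem_erase hk)]
    simp only [g, if_pos rfl]
    ring
  simp only [hg, ← Fintype.prod_sum]
  rw [prod_eq_single k₀ (fun k _ hk => by simp only [g, if_neg hk, hq]) (by simp)]
  simp only [g, if_pos rfl]

theorem sum_pi_prod_mul_sum_apply {q : ι → R} (hq : ∑ j, q j = 1) (f : ι → R) :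
    ∑ s : κ → ι, (∏ k, q (s k)) * ∑ k, f (s k) = Fintype.card κ * ∑ j, q j * f j := by
  calc ∑ s : κ → ι, (∏ k, q (s k)) * ∑ k, f (s k)
      = ∑ k, ∑ s : κ → ι, (∏ k, q (s k)) * f (s k) := by simp_rw [mul_sum]; exact sum_comm
    _ = Fintype.card κ * ∑ j, q j * f j := by
      simp only [sum_pi_prod_mul_apply hq, sum_const, card_univ, nsmul_eq_mul]

end IIDSampling

theorem sampled_softmax_unbiased_negative_general {ι : Type*} [Fintype ι] [DecidableEq ι]
    (m : ℕ) (hm : 1 ≤ m) (o1 : ℝ) (o : ι → ℝ) (q : ι → ℝ)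
    (hq : ∀ j, q j = Real.exp (o j) / ∑ l, Real.exp (o l)) (i : ι) :
    ∑ s : Fin m → ι, (∏ k, q (s k)) *
        (∑ k, if s k = i then
            Real.exp (o (s k) - Real.log (m * q (s k))) /
              (Real.exp o1 +
                ∑ k', Real.exp (o (s k') - Real.log (m * q (s k'))))
          else 0) =
      Real.exp (o i) / (Real.exp o1 + ∑ l, Real.exp (o l)) := by
  set Z := ∑ l, exp (o l)
  have hZ : 0 < Z := sum_pos (fun l _ => exp_pos _) ⟨i, mem_univ i⟩
  have hm_pos : (0 : ℝ) < m := by exact_mod_cast hm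
  have hq_sum : ∑ j, q j = 1 := by
    simp only [hq, ← sum_div]
    exact div_self hZ.ne'
  have hcorrected : ∀ j, exp (o j - log (m * q j)) = Z / m := fun j => by
    rw [hq j, exp_sub_log_mul_exp_div hm_pos hZ]
  simp only [hcorrected, sum_const, card_univ, Fintype.card_fin, nsmul_eq_mul,
    mul_div_cancel₀ _ hm_pos.ne']
  rw [sum_pi_prod_mul_sum_apply hq_sum (fun j => if j = i then Z / m / (exp o1 + Z) else 0)]
  simp only [mul_ite, mul_zero, sum_ite_eq', mem_univ, if_true, Fintype.card_fin, hq i]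
  field_simp

/-- Under softmax sampling, the sampled softmax gradient is unbiased for
every negative class i. -/
theorem sampled_softmax_unbiased_negative {ι : Type*} [Fintype ι] [DecidableEq ι] [Nonempty ι]
    (m : ℕ) (hm : 1 ≤ m) (o1 : ℝ) (o : ι → ℝ) (q : ι → ℝ)
    (hq : ∀ j, q j = Real.exp (o j) / ∑ l, Real.exp (o l)) (i : ι) :
    ∑ s : Fin m → ι, (∏ k, q (s k)) *
        (∑ k, if s k = i then
            Real.exp (o (s k) - Real.log (m * q (s k))) /
              (Real.exp o1 +
                ∑ k', Real.exp (o (s k') - Real.log (m * q (s k'))))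
          else 0) =
      Real.exp (o i) / (Real.exp o1 + ∑ l, Real.exp (o l)) :=
  sampled_softmax_unbiased_negative_general m hm o1 o q hq i
end
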